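/- Let P_1 and P_2 be stochastic reversible matrices with strictly positive stationary distributions μ_1 and μ_2. Then |λ_2(P_1 P_2)| ≤ |λ_2(P_1)| |λ_2(P_2)| (max_i μ_1[i]/μ_2[i]) (max_i μ_2[i]/μ_1[i]), where λ_2 denotes a second-largest-in-modulus eigenvalue. -/

import Mathlib

open Matrix Polynomial

/-- The multiset of (complex) eigenvalues of a real square matrix. -/
noncomputable def spec {m : ℕ} (M : Matrix (Fin m) (Fin m) ℝ) : Multiset ℂ :=
  ((M.map (Complex.ofReal)).charpoly).roots

/-- `lam` is an eigenvalue of second largest modulus of `M`. -/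
noncomputable def IsSecondEig {m : ℕ} (M : Matrix (Fin m) (Fin m) ℝ) (lam : ℂ) : Prop :=
  ∃ lam₁ ∈ spec M, lam ∈ (spec M).erase lam₁ ∧
    (∀ x ∈ spec M, ‖x‖ ≤ ‖lam₁‖) ∧
    (∀ x ∈ (spec M).erase lam₁, ‖x‖ ≤ ‖lam‖)

section Helpers

variable {n : Type*} [Fintype n] [DecidableEq n]

private lemma my_charmatrix_conj {R : Type*} [CommRing R] {U D V : Matrix n n R} (h : U * V = 1) :
    charmatrix (U * D * V) = U.map Polynomial.C * charmatrix D * V.map Polynomial.C := by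
  have h1 : (U.map Polynomial.C) * (V.map Polynomial.C) = 1 := by
    rw [← Matrix.map_mul (f := (Polynomial.C : R →+* R[X])), h]; simp
  have hs : Matrix.scalar n (X : R[X]) = (X : R[X]) • 1 := by
    ext i j
    by_cases hij : i = j <;>
      simp [Matrix.scalar, Matrix.smul_apply, Matrix.one_apply, diagonal_apply, hij]
  unfold charmatrix
  rw [mul_sub, sub_mul, hs]
  congr 1
  · rw [mul_smul_comm, smul_mul_assoc, mul_one, h1]
  · simp only [RingHom.mapMatrix_apply]
    rw [← Matrix.map_mul (f := (Polynomial.C : R →+* R[X])),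
        ← Matrix.map_mul (f := (Polynomial.C : R →+* R[X]))]

private lemma my_charpoly_conj {R : Type*} [CommRing R] {U D V : Matrix n n R} (h : U * V = 1) :
    (U * D * V).charpoly = D.charpoly := by
  unfold Matrix.charpoly
  rw [my_charmatrix_conj h, det_mul, det_mul]
  have h1 : (U.map Polynomial.C) * (V.map Polynomial.C) = 1 := by
    rw [← Matrix.map_mul (f := (Polynomial.C : R →+* R[X])), h]; simp
  have h2 : (U.map Polynomial.C).det * (V.map Polynomial.C).det = 1 := by
    rw [← det_mul, h1, det_one]
  calc (U.map Polynomial.C).det * (charmatrix D).det * (V.map Polynomial.C).det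
      = (charmatrix D).det * ((U.map Polynomial.C).det * (V.map Polynomial.C).det) := by ring
    _ = (charmatrix D).det := by rw [h2, mul_one]

private lemma my_charpoly_transpose {R : Type*} [CommRing R] (M : Matrix n n R) :
    Mᵀ.charpoly = M.charpoly := by
  unfold Matrix.charpoly
  have : charmatrix Mᵀ = (charmatrix M)ᵀ := by
    ext i j
    simp [charmatrix_apply, diagonal_apply, eq_comm]
  rw [this, det_transpose]

private lemma my_charpoly_diagonal {R : Type*} [CommRing R] (d : n → R) :
    (diagonal d).charpoly = ∏ i, (X - Polynomial.C (d i)) := by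
  unfold Matrix.charpoly
  have : charmatrix (diagonal d) = diagonal (fun i => X - Polynomial.C (d i)) := by
    ext i j
    simp only [charmatrix_apply, diagonal_apply]
    split <;> simp
  rw [this, det_diagonal]

private lemma my_eval_charpoly (M : Matrix n n ℂ) (x : ℂ) :
    M.charpoly.eval x = (Matrix.diagonal (fun _ => x) - M).det := by
  unfold Matrix.charpoly
  rw [← Polynomial.coe_evalRingHom, RingHom.map_det]
  congr 1
  ext i j
  simp [charmatrix_apply, diagonal_apply, Matrix.sub_apply]
  split <;> simp

private lemma mem_roots_charpoly_iff (M : Matrix n n ℂ) (x : ℂ) :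
    x ∈ M.charpoly.roots ↔ ∃ v, v ≠ 0 ∧ M *ᵥ v = x • v := by
  rw [Polynomial.mem_roots (M.charpoly_monic.ne_zero), Polynomial.IsRoot,
      my_eval_charpoly, ← Matrix.exists_mulVec_eq_zero_iff]
  have key : ∀ v : n → ℂ, (Matrix.diagonal (fun _ => x) - M) *ᵥ v = x • v - M *ᵥ v := by
    intro v
    funext i
    simp [Matrix.sub_mulVec, Matrix.mulVec_diagonal]
  constructor
  · rintro ⟨v, hv, hMv⟩
    exact ⟨v, hv, by rw [key] at hMv; linear_combination (norm := module) -hMv⟩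
  · rintro ⟨v, hv, hMv⟩
    exact ⟨v, hv, by rw [key, hMv, sub_self]⟩

private lemma mem_spec_iff {m : ℕ} (P : Matrix (Fin m) (Fin m) ℝ) (x : ℂ) :
    x ∈ spec P ↔ ∃ v, v ≠ 0 ∧ (P.map Complex.ofReal) *ᵥ v = x • v :=
  mem_roots_charpoly_iff _ x

private lemma stoch_spec_le_one {m : ℕ} (P : Matrix (Fin m) (Fin m) ℝ) (hP : ∀ i j, 0 ≤ P i j)
    (hrow : ∀ i, ∑ j, P i j = 1) : ∀ x ∈ spec P, ‖x‖ ≤ 1 := by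
  intro x hx
  obtain ⟨v, hv0, hMv⟩ := (mem_spec_iff P x).1 hx
  obtain ⟨i, _, hmax⟩ := Finset.exists_max_image Finset.univ (fun i => ‖v i‖)
    (by
      obtain ⟨j, hj⟩ := Function.ne_iff.1 hv0
      exact ⟨j, Finset.mem_univ j⟩)
  have hvi : 0 < ‖v i‖ := by
    obtain ⟨j, hj⟩ := Function.ne_iff.1 hv0
    calc (0:ℝ) < ‖v j‖ := by simpa using hj
      _ ≤ ‖v i‖ := hmax j (Finset.mem_univ j)
  have hrowi : x * v i = ∑ j, (P i j : ℂ) * v j := by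
    have := congrFun hMv i
    simpa [Matrix.mulVec, dotProduct, Matrix.map_apply] using this.symm
  have : ‖x‖ * ‖v i‖ ≤ 1 * ‖v i‖ := by
    rw [← norm_mul, hrowi, one_mul]
    calc ‖∑ j, (P i j : ℂ) * v j‖ ≤ ∑ j, ‖(P i j : ℂ) * v j‖ :=
          norm_sum_le _ _
      _ = ∑ j, P i j * ‖v j‖ := by
          refine Finset.sum_congr rfl fun j _ => ?_
          rw [norm_mul, Complex.norm_real, Real.norm_eq_abs, abs_of_nonneg (hP i j)]
      _ ≤ ∑ j, P i j * ‖v i‖ := by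
          refine Finset.sum_le_sum fun j _ => ?_
          exact mul_le_mul_of_nonneg_left (hmax j (Finset.mem_univ j)) (hP i j)
      _ = (∑ j, P i j) * ‖v i‖ := by rw [Finset.sum_mul]
      _ = ‖v i‖ := by rw [hrow i, one_mul]
  exact le_of_mul_le_mul_right (by simpa using this) hvi

private lemma one_mem_spec {m : ℕ} [NeZero m] (P : Matrix (Fin m) (Fin m) ℝ)
    (hrow : ∀ i, ∑ j, P i j = 1) : (1 : ℂ) ∈ spec P := by
  rw [mem_spec_iff]
  refine ⟨fun _ => 1, ?_, ?_⟩
  · intro h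
    exact one_ne_zero (congrFun h ⟨0, Nat.pos_of_ne_zero (NeZero.ne m)⟩)
  · funext i
    simp only [Matrix.mulVec, dotProduct, Matrix.map_apply, Pi.smul_apply, smul_eq_mul,
      mul_one, one_mul]
    rw [← Complex.ofReal_sum, hrow i, Complex.ofReal_one]

private lemma herm_roots (A : Matrix n n ℂ) (hA : A.IsHermitian) :
    A.charpoly.roots = Finset.univ.val.map (fun i => ((hA.eigenvalues i : ℝ) : ℂ)) := by
  have hU : (hA.eigenvectorUnitary : Matrix n n ℂ) * star (hA.eigenvectorUnitary : Matrix n n ℂ)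
      = 1 := Matrix.mem_unitaryGroup_iff.mp (hA.eigenvectorUnitary).2
  conv_lhs => rw [hA.spectral_theorem]
  rw [Unitary.conjStarAlgAut_apply, my_charpoly_conj hU, my_charpoly_diagonal]
  have : ∏ i, (X - Polynomial.C ((RCLike.ofReal ∘ hA.eigenvalues) i)) =
      (Multiset.map (fun a => X - Polynomial.C a)
        (Finset.univ.val.map (fun i => ((hA.eigenvalues i : ℝ) : ℂ)))).prod := by
    rw [Multiset.map_map]
    rfl
  rw [this, Polynomial.roots_multiset_prod_X_sub_C]

private lemma herm_contraction {m : ℕ} (A : Matrix (Fin m) (Fin m) ℂ) (hA : A.IsHermitian)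
    (β : ℝ) (hβ : 0 ≤ β)
    (h1 : ∀ i, |hA.eigenvalues i| ≤ 1)
    (i₀ : Fin m) (hsm : ∀ i, i ≠ i₀ → |hA.eigenvalues i| ≤ β)
    (z w : EuclideanSpace ℂ (Fin m)) (hz : z ≠ 0)
    (hAz : Matrix.toEuclideanLin A z = z)
    (horth : (inner ℂ z w) = 0) :
    ‖Matrix.toEuclideanLin A w‖ ≤ β * ‖w‖ := by
  classical
  set b := hA.eigenvectorBasis with hb
  have hsymm := Matrix.isHermitian_iff_isSymmetric.1 hA
  have hTb : ∀ i, Matrix.toEuclideanLin A (b i) = ((hA.eigenvalues i : ℝ) : ℂ) • b i := by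
    intro i
    have h := hA.mulVec_eigenvectorBasis i
    rw [Matrix.toEuclideanLin_apply, h]
    ext j
    simp [Complex.real_smul, hb]
  have hdiag : ∀ (v : EuclideanSpace ℂ (Fin m)) (j : Fin m),
      b.repr (Matrix.toEuclideanLin A v) j = ((hA.eigenvalues j : ℝ) : ℂ) * b.repr v j := by
    intro v j
    rw [b.repr_apply_apply, b.repr_apply_apply, ← hsymm (b j) v, hTb j, inner_smul_left]
    simp
  have hpt : ∀ j, ‖b.repr (Matrix.toEuclideanLin A w) j‖ ≤ β * ‖b.repr w j‖ := by
    intro j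
    rw [hdiag w j]
    by_cases hj : j ≠ i₀
    · rw [norm_mul]
      refine mul_le_mul_of_nonneg_right ?_ (norm_nonneg _)
      rw [Complex.norm_real, Real.norm_eq_abs]
      exact hsm j hj
    · push_neg at hj
      subst hj
      by_cases hβ1 : 1 ≤ β
      · rw [norm_mul]
        refine mul_le_mul_of_nonneg_right ?_ (norm_nonneg _)
        rw [Complex.norm_real, Real.norm_eq_abs]
        exact le_trans (h1 j) hβ1
      · push_neg at hβ1
        have hzd : ∀ i, ((hA.eigenvalues i : ℝ) : ℂ) * b.repr z i = b.repr z i := by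
          intro i
          rw [← hdiag z i, hAz]
        have hzcoord : ∀ i, i ≠ j → b.repr z i = 0 := by
          intro i hi
          have hne : ((hA.eigenvalues i : ℝ) : ℂ) - 1 ≠ 0 := by
            intro hcontra
            have h2 : hA.eigenvalues i = 1 := by
              have := sub_eq_zero.mp hcontra
              exact_mod_cast this
            have h3 := hsm i hi
            rw [h2] at h3
            simp at h3
            linarith
          have h2 : (((hA.eigenvalues i : ℝ) : ℂ) - 1) * b.repr z i = 0 := by
            rw [sub_mul, one_mul, hzd i, sub_self]
          exact (mul_eq_zero.mp h2).resolve_left hne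
        have hdj : b.repr z j ≠ 0 := by
          intro hdj
          apply hz
          have : b.repr z = 0 := by
            ext i
            by_cases hi : i = j
            · rw [hi]; simpa using hdj
            · simpa using hzcoord i hi
          simpa using b.repr.map_eq_zero_iff.1 this
        have hcj : b.repr w j = 0 := by
          have hinner : (inner ℂ (b.repr z) (b.repr w)) = 0 := by
            rw [b.repr.inner_map_map z w, horth]
          rw [PiLp.inner_apply] at hinner
          have hsum : ∑ i, (inner ℂ (b.repr z i) (b.repr w i))
              = inner ℂ (b.repr z j) (b.repr w j) := by
            refine Finset.sum_eq_single j (fun i _ hi => ?_) (by simp)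
            rw [hzcoord i hi]
            simp
          rw [hsum] at hinner
          rw [RCLike.inner_apply] at hinner
          rcases mul_eq_zero.mp hinner with h3 | h3
          · exact h3
          · exact absurd (by simpa using h3) hdj
        rw [hcj]
        simp
  rw [← b.repr.norm_map (Matrix.toEuclideanLin A w), ← b.repr.norm_map w]
  rw [EuclideanSpace.norm_eq, EuclideanSpace.norm_eq]
  have hsumle : ∑ i, ‖b.repr (Matrix.toEuclideanLin A w) i‖ ^ 2
      ≤ β ^ 2 * ∑ i, ‖b.repr w i‖ ^ 2 := by
    rw [Finset.mul_sum]
    refine Finset.sum_le_sum fun i _ => ?_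
    calc ‖b.repr (Matrix.toEuclideanLin A w) i‖ ^ 2 ≤ (β * ‖b.repr w i‖) ^ 2 :=
          pow_le_pow_left₀ (norm_nonneg _) (hpt i) 2
      _ = β ^ 2 * ‖b.repr w i‖ ^ 2 := by ring
  calc √(∑ i, ‖b.repr (Matrix.toEuclideanLin A w) i‖ ^ 2)
      ≤ √(β ^ 2 * ∑ i, ‖b.repr w i‖ ^ 2) := Real.sqrt_le_sqrt hsumle
    _ = β * √(∑ i, ‖b.repr w i‖ ^ 2) := by
        rw [Real.sqrt_mul (sq_nonneg β), Real.sqrt_sq hβ]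

private lemma key_split {k : ℕ} (N : Matrix (Fin (k+1)) (Fin (k+1)) ℂ) (z : Fin (k+1) → ℂ)
    (hz0 : z 0 ≠ 0) (hzN : Matrix.vecMul z N = z) :
    ∃ Q : Matrix (Fin k) (Fin k) ℂ,
      N.charpoly = (X - Polynomial.C 1) * Q.charpoly ∧
      ∀ η ∈ Q.charpoly.roots, ∃ w : Fin (k+1) → ℂ,
        w ≠ 0 ∧ N *ᵥ w = η • w ∧ dotProduct z w = 0 := by
  classical
  set c : Fin (k+1) → ℂ := fun j => if j = 0 then 0 else z j / z 0 with hc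
  have hc0 : c 0 = 0 := by simp [hc]
  set E : Matrix (Fin (k+1)) (Fin (k+1)) ℂ :=
    Matrix.of (fun i j => (if i = 0 then (1:ℂ) else 0) * c j) with hE
  set B : Matrix (Fin (k+1)) (Fin (k+1)) ℂ := 1 - E with hB
  set B' : Matrix (Fin (k+1)) (Fin (k+1)) ℂ := 1 + E with hB'
  have hEapp : ∀ i j, E i j = (if i = 0 then (1:ℂ) else 0) * c j := fun i j => rfl
  have hEE : E * E = 0 := by
    ext i j
    simp only [Matrix.mul_apply, hEapp, Matrix.zero_apply]
    have : ∀ l : Fin (k+1), (if i = 0 then (1:ℂ) else 0) * c l *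
        ((if l = 0 then (1:ℂ) else 0) * c j) =
        if l = 0 then (if i = 0 then (1:ℂ) else 0) * c l * c j else 0 := by
      intro l
      by_cases hl : l = 0 <;> simp [hl]
    rw [Finset.sum_congr rfl fun l _ => this l]
    rw [Finset.sum_ite_eq' Finset.univ (0 : Fin (k+1))]
    simp [hc0]
  have hBB' : B * B' = 1 := by
    rw [hB, hB', Matrix.sub_mul, Matrix.mul_add, Matrix.mul_add, Matrix.one_mul, Matrix.mul_one,
      hEE]
    noncomm_ring
  have hB'B : B' * B = 1 := by
    rw [hB, hB', Matrix.add_mul, Matrix.mul_sub, Matrix.mul_sub, Matrix.one_mul, Matrix.mul_one,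
      hEE]
    noncomm_ring
  have hcz : ∀ a, c a = z a / z 0 - (if a = 0 then 1 else 0) := by
    intro a
    by_cases ha : a = 0
    · subst ha; simp [hc, div_self hz0]
    · simp [hc, ha]
  set M' : Matrix (Fin (k+1)) (Fin (k+1)) ℂ := B' * N * B with hM'
  have hB'N : ∀ b, (B' * N) 0 b = z b / z 0 := by
    intro b
    have hzb : ∑ a, z a * N a b = z b := by
      have := congrFun hzN b
      simpa [Matrix.vecMul, dotProduct] using this
    have hsum : (B' * N) 0 b = N 0 b + ∑ a, c a * N a b := by
      simp only [hB', Matrix.add_mul, Matrix.one_mul, Matrix.add_apply]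
      congr 1
      simp only [Matrix.mul_apply, hEapp]
      simp
    rw [hsum]
    have e0 : ∑ a, c a * N a b
        = ∑ a, (z a / z 0 * N a b - (if a = 0 then 1 else 0) * N a b) := by
      refine Finset.sum_congr rfl fun a _ => ?_
      rw [hcz a]; ring
    have e1 : ∑ a, z a / z 0 * N a b = (∑ a, z a * N a b) / z 0 := by
      rw [Finset.sum_div]
      exact Finset.sum_congr rfl fun a _ => by ring
    rw [e0, Finset.sum_sub_distrib, e1, hzb]
    have e2 : ∑ a, (if a = (0:Fin (k+1)) then (1:ℂ) else 0) * N a b = N 0 b := by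
      simp [ite_mul]
    rw [e2]
    ring
  have hzB : Matrix.vecMul z B = fun j => if j = 0 then z 0 else 0 := by
    funext j
    simp only [hB, Matrix.vecMul, dotProduct, Matrix.sub_apply, Matrix.one_apply, hEapp]
    rw [Finset.sum_congr rfl (fun a _ => by rw [mul_sub])]
    rw [Finset.sum_sub_distrib]
    have e3 : ∑ a, z a * (if a = j then (1:ℂ) else 0) = z j := by simp [mul_ite]
    have e4 : ∑ a, z a * ((if a = 0 then (1:ℂ) else 0) * c j) = z 0 * c j := by
      have : ∀ a : Fin (k+1), z a * ((if a = 0 then (1:ℂ) else 0) * c j)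
          = if a = 0 then z a * c j else 0 := by
        intro a; by_cases ha : a = 0 <;> simp [ha]
      rw [Finset.sum_congr rfl fun a _ => this a]
      rw [Finset.sum_ite_eq' Finset.univ (0 : Fin (k+1))]
      simp
    rw [e3, e4]
    by_cases hj : j = 0
    · subst hj; simp [hc0]
    · simp only [hj, if_false, hc, sub_eq_zero]
      field_simp
  have hrow0 : ∀ j, M' 0 j = if j = 0 then 1 else 0 := by
    intro j
    have h0 : M' 0 j = ∑ b, (B' * N) 0 b * B b j := by
      simp [hM', Matrix.mul_apply]
    rw [h0, Finset.sum_congr rfl (fun b _ => by rw [hB'N b])]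
    have e1 : ∑ b, z b / z 0 * B b j = (∑ b, z b * B b j) / z 0 := by
      rw [Finset.sum_div]
      exact Finset.sum_congr rfl fun b _ => by ring
    have e2 : ∑ b, z b * B b j = if j = 0 then z 0 else 0 := by
      have := congrFun hzB j
      simpa [Matrix.vecMul, dotProduct] using this
    rw [e1, e2]
    by_cases hj : j = 0 <;> simp [hj, div_self hz0]
  refine ⟨M'.submatrix Fin.succ Fin.succ, ?_, ?_⟩
  · have hNc : N.charpoly = M'.charpoly := by
      rw [hM', ← my_charpoly_conj (U := B') (V := B) hB'B]
    rw [hNc]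
    show (charmatrix M').det = _
    rw [Matrix.det_succ_row_zero]
    have hterm : ∀ j : Fin (k+1), j ≠ 0 →
        (-1 : ℂ[X]) ^ (j : ℕ) * (charmatrix M') 0 j *
          ((charmatrix M').submatrix Fin.succ j.succAbove).det = 0 := by
      intro j hj
      have hcm : (charmatrix M') 0 j = 0 := by
        have h0j : (0 : Fin (k+1)) ≠ j := fun h => hj h.symm
        rw [charmatrix_apply_ne _ _ _ h0j, hrow0 j, if_neg hj]
        simp
      rw [hcm]
      ring
    rw [Finset.sum_eq_single (0 : Fin (k+1)) (fun j _ hj => hterm j hj) (by simp)]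
    have h00 : (charmatrix M') 0 0 = X - Polynomial.C 1 := by
      rw [charmatrix_apply_eq, hrow0 0, if_pos rfl]
    rw [h00]
    have hsub : (charmatrix M').submatrix Fin.succ (Fin.succAbove 0) =
        charmatrix (M'.submatrix Fin.succ Fin.succ) := by
      rw [Fin.succAbove_zero]
      ext i j
      by_cases hij : i = j
      · subst hij
        simp [charmatrix_apply_eq, Matrix.submatrix_apply]
      · have hsij : Fin.succ i ≠ Fin.succ j := fun h => hij (Fin.succ_injective _ h)
        simp [charmatrix_apply_ne _ _ _ hij, charmatrix_apply_ne _ _ _ hsij,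
          Matrix.submatrix_apply]
    rw [hsub]
    show _ = (X - Polynomial.C 1) * (charmatrix _).det
    simp [Fin.val_zero]
  · intro η hη
    obtain ⟨v, hv0, hQv⟩ := (mem_roots_charpoly_iff _ η).1 hη
    set w' : Fin (k+1) → ℂ := Fin.cases 0 v with hw'
    have hw'0 : w' 0 = 0 := rfl
    have hw's : ∀ b : Fin k, w' b.succ = v b := fun b => rfl
    have hM'w' : M' *ᵥ w' = η • w' := by
      funext i
      induction i using Fin.cases with
      | zero =>
        have h0 : (M' *ᵥ w') 0 = ∑ j, M' 0 j * w' j := by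
          simp [Matrix.mulVec, dotProduct]
        rw [h0, Finset.sum_congr rfl (fun j _ => by rw [hrow0 j])]
        rw [Finset.sum_congr rfl (fun j _ => by rw [ite_mul, one_mul, zero_mul])]
        rw [Finset.sum_ite_eq' Finset.univ (0 : Fin (k+1))]
        simp [hw'0]
      | succ a =>
        have h0 : (M' *ᵥ w') a.succ = ∑ j, M' a.succ j * w' j := by
          simp [Matrix.mulVec, dotProduct]
        rw [h0, Fin.sum_univ_succ]
        simp only [hw'0, mul_zero, zero_add, hw's]
        have := congrFun hQv a
        simp only [Matrix.mulVec, dotProduct, Matrix.submatrix_apply,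
          Pi.smul_apply, smul_eq_mul] at this
        rw [this]
        simp [hw's]
    refine ⟨B *ᵥ w', ?_, ?_, ?_⟩
    · intro h
      apply hv0
      have hw'z : w' = 0 := by
        have h2 := congrArg (fun u => B' *ᵥ u) h
        simpa [Matrix.mulVec_mulVec, hB'B] using h2
      funext a
      have := congrFun hw'z a.succ
      simpa [hw's] using this
    · have hNB : N * B = B * M' := by
        rw [hM']
        calc N * B = (B * B') * N * B := by rw [hBB', Matrix.one_mul]
          _ = B * (B' * N * B) := by noncomm_ring
      rw [Matrix.mulVec_mulVec, hNB, ← Matrix.mulVec_mulVec, hM'w', Matrix.mulVec_smul]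
    · rw [dotProduct_mulVec, hzB]
      simp only [dotProduct, ite_mul, zero_mul]
      rw [Finset.sum_ite_eq' Finset.univ (0 : Fin (k+1))]
      simp [hw'0]

end Helpers

private lemma eig_facts {m' : ℕ} (P : Matrix (Fin m') (Fin m') ℝ)
    (hP : ∀ i j, 0 ≤ P i j) (hrow : ∀ i, ∑ j, P i j = 1)
    (S : Matrix (Fin m') (Fin m') ℂ) (hspec : S.charpoly.roots = spec P)
    (hS : S.IsHermitian) (lam' : ℂ) (h2 : IsSecondEig P lam') :
    (∀ i, |hS.eigenvalues i| ≤ 1) ∧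
      ∃ i₀, ∀ i, i ≠ i₀ → |hS.eigenvalues i| ≤ ‖lam'‖ := by
  have hroots := herm_roots S hS
  have hmem : ∀ i, ((hS.eigenvalues i : ℝ) : ℂ) ∈ spec P := by
    intro i
    rw [← hspec, hroots]
    exact Multiset.mem_map_of_mem _ (by simp)
  constructor
  · intro i
    have := stoch_spec_le_one P hP hrow _ (hmem i)
    simpa [Complex.norm_real] using this
  · obtain ⟨t, htmem, _, _, hsec⟩ := h2
    rw [← hspec, hroots] at htmem
    obtain ⟨i₀, _, hi₀⟩ := Multiset.mem_map.1 htmem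
    refine ⟨i₀, fun i hi => ?_⟩
    have hin : ((hS.eigenvalues i : ℝ) : ℂ) ∈ (spec P).erase t := by
      rw [← hspec, hroots, ← hi₀]
      have huniv : (Finset.univ.val : Multiset (Fin m')) = i₀ ::ₘ Finset.univ.val.erase i₀ :=
        (Multiset.cons_erase (by simp)).symm
      rw [huniv, Multiset.map_cons, Multiset.erase_cons_head]
      refine Multiset.mem_map_of_mem _ ?_
      exact (Multiset.mem_erase_of_ne hi).2 (by simp)
    have := hsec _ hin
    simpa [Complex.norm_real] using this

private lemma diag_contract {m' : ℕ} (d : Fin m' → ℂ) (cB : ℝ) (hcB : 0 ≤ cB)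
    (hc : ∀ i, ‖d i‖ ≤ cB) (x : Fin m' → ℂ) :
    ‖(WithLp.equiv 2 (Fin m' → ℂ)).symm ((Matrix.diagonal d) *ᵥ x)‖
      ≤ cB * ‖(WithLp.equiv 2 (Fin m' → ℂ)).symm x‖ := by
  rw [EuclideanSpace.norm_eq, EuclideanSpace.norm_eq]
  have hpt : ∀ i, ‖((WithLp.equiv 2 (Fin m' → ℂ)).symm ((Matrix.diagonal d) *ᵥ x)) i‖ ^ 2
      ≤ cB ^ 2 * ‖((WithLp.equiv 2 (Fin m' → ℂ)).symm x) i‖ ^ 2 := by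
    intro i
    have h1 : ((WithLp.equiv 2 (Fin m' → ℂ)).symm ((Matrix.diagonal d) *ᵥ x)) i = d i * x i := by
      simp [Matrix.mulVec_diagonal]
    have h2 : ((WithLp.equiv 2 (Fin m' → ℂ)).symm x) i = x i := rfl
    rw [h1, h2, norm_mul]
    calc (‖d i‖ * ‖x i‖) ^ 2 = ‖d i‖ ^ 2 * ‖x i‖ ^ 2 := by ring
      _ ≤ cB ^ 2 * ‖x i‖ ^ 2 := by
          refine mul_le_mul_of_nonneg_right ?_ (sq_nonneg _)
          refine pow_le_pow_left₀ (norm_nonneg _) ?_ 2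
          simpa using hc i
  calc √(∑ i, ‖((WithLp.equiv 2 (Fin m' → ℂ)).symm ((Matrix.diagonal d) *ᵥ x)) i‖ ^ 2)
      ≤ √(∑ i, cB ^ 2 * ‖((WithLp.equiv 2 (Fin m' → ℂ)).symm x) i‖ ^ 2) := by
        refine Real.sqrt_le_sqrt (Finset.sum_le_sum fun i _ => hpt i)
    _ = cB * √(∑ i, ‖((WithLp.equiv 2 (Fin m' → ℂ)).symm x) i‖ ^ 2) := by
        rw [← Finset.mul_sum, Real.sqrt_mul (sq_nonneg cB), Real.sqrt_sq hcB]

private lemma contract_vec {m' : ℕ} (S : Matrix (Fin m') (Fin m') ℂ) (hS : S.IsHermitian)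
    (β : ℝ) (hβ : 0 ≤ β) (h1 : ∀ i, |hS.eigenvalues i| ≤ 1)
    (i₀ : Fin m') (hsm : ∀ i, i ≠ i₀ → |hS.eigenvalues i| ≤ β)
    (z : Fin m' → ℂ) (hz : z ≠ 0) (hzreal : ∀ i, (starRingEnd ℂ) (z i) = z i)
    (hSz : S *ᵥ z = z) (w : Fin m' → ℂ) (horth : dotProduct z w = 0) :
    ‖(WithLp.equiv 2 (Fin m' → ℂ)).symm (S *ᵥ w)‖
      ≤ β * ‖(WithLp.equiv 2 (Fin m' → ℂ)).symm w‖ := by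
  have key : ∀ v : Fin m' → ℂ,
      Matrix.toEuclideanLin S ((WithLp.equiv 2 (Fin m' → ℂ)).symm v)
        = (WithLp.equiv 2 (Fin m' → ℂ)).symm (S *ᵥ v) := by
    intro v
    rw [Matrix.toEuclideanLin_apply]; rfl
  have h := herm_contraction S hS β hβ h1 i₀ hsm
    ((WithLp.equiv 2 (Fin m' → ℂ)).symm z) ((WithLp.equiv 2 (Fin m' → ℂ)).symm w)
    (fun hcontra => hz (by
      have := congrArg (WithLp.equiv 2 (Fin m' → ℂ)) hcontra
      simpa using this))
    (by rw [key, hSz])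
    (by
      rw [PiLp.inner_apply]
      simp only [RCLike.inner_apply, WithLp.equiv_symm_apply, PiLp.toLp_apply]
      rw [← horth]
      exact Finset.sum_congr rfl fun i _ => by rw [hzreal i, mul_comm])
  rw [key] at h
  exact h

theorem second_eig_product_of_two_reversible {m : ℕ} [NeZero m]
    (P₁ P₂ : Matrix (Fin m) (Fin m) ℝ)
    (hP₁ : ∀ i j, 0 ≤ P₁ i j) (hrow₁ : ∀ i, ∑ j, P₁ i j = 1)
    (hP₂ : ∀ i j, 0 ≤ P₂ i j) (hrow₂ : ∀ i, ∑ j, P₂ i j = 1)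
    (μ₁ μ₂ : Fin m → ℝ)
    (hμ₁pos : ∀ i, 0 < μ₁ i) (hμ₁sum : ∑ i, μ₁ i = 1) (hstat₁ : Matrix.vecMul μ₁ P₁ = μ₁)
    (hμ₂pos : ∀ i, 0 < μ₂ i) (hμ₂sum : ∑ i, μ₂ i = 1) (hstat₂ : Matrix.vecMul μ₂ P₂ = μ₂)
    (hrev₁ : ∀ i j, μ₁ i * P₁ i j = μ₁ j * P₁ j i)
    (hrev₂ : ∀ i j, μ₂ i * P₂ i j = μ₂ j * P₂ j i)
    (lam lam₁ lam₂ : ℂ)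
    (hlam : IsSecondEig (P₁ * P₂) lam)
    (hlam₁ : IsSecondEig P₁ lam₁) (hlam₂ : IsSecondEig P₂ lam₂) :
    ‖lam‖ ≤ ‖lam₁‖ * ‖lam₂‖ *
      ((⨆ i, μ₁ i / μ₂ i) * ⨆ i, μ₂ i / μ₁ i) := by
  classical
  obtain ⟨k, rfl⟩ : ∃ k, m = k + 1 :=
    ⟨m - 1, (Nat.succ_pred_eq_of_pos (Nat.pos_of_ne_zero (NeZero.ne m))).symm⟩
  set β₁ := ‖lam₁‖ with hβ₁def
  set β₂ := ‖lam₂‖ with hβ₂def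
  have hβ₁0 : 0 ≤ β₁ := norm_nonneg _
  have hβ₂0 : 0 ≤ β₂ := norm_nonneg _
  -- square roots of the stationary measures
  set s₁ : Fin (k+1) → ℝ := fun i => Real.sqrt (μ₁ i) with hs₁def
  set s₂ : Fin (k+1) → ℝ := fun i => Real.sqrt (μ₂ i) with hs₂def
  have hs₁pos : ∀ i, 0 < s₁ i := fun i => Real.sqrt_pos.2 (hμ₁pos i)
  have hs₂pos : ∀ i, 0 < s₂ i := fun i => Real.sqrt_pos.2 (hμ₂pos i)
  have hs₁sq : ∀ i, s₁ i * s₁ i = μ₁ i := fun i => Real.mul_self_sqrt (hμ₁pos i).le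
  have hs₂sq : ∀ i, s₂ i * s₂ i = μ₂ i := fun i => Real.mul_self_sqrt (hμ₂pos i).le
  set z₁ : Fin (k+1) → ℂ := fun i => (s₁ i : ℂ) with hz₁def
  set z₂ : Fin (k+1) → ℂ := fun i => (s₂ i : ℂ) with hz₂def
  have hz₁ne : ∀ i, z₁ i ≠ 0 := fun i => by
    simp only [hz₁def, ne_eq, Complex.ofReal_eq_zero]
    exact (hs₁pos i).ne'
  have hz₂ne : ∀ i, z₂ i ≠ 0 := fun i => by
    simp only [hz₂def, ne_eq, Complex.ofReal_eq_zero]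
    exact (hs₂pos i).ne'
  have hz₁0 : z₁ ≠ 0 := fun h => hz₁ne 0 (congrFun h 0)
  have hz₂0 : z₂ ≠ 0 := fun h => hz₂ne 0 (congrFun h 0)
  have hz₁real : ∀ i, (starRingEnd ℂ) (z₁ i) = z₁ i := fun i => Complex.conj_ofReal _
  have hz₂real : ∀ i, (starRingEnd ℂ) (z₂ i) = z₂ i := fun i => Complex.conj_ofReal _
  set Q₁ : Matrix (Fin (k+1)) (Fin (k+1)) ℂ := P₁.map Complex.ofReal with hQ₁def
  set Q₂ : Matrix (Fin (k+1)) (Fin (k+1)) ℂ := P₂.map Complex.ofReal with hQ₂def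
  set E₁ : Matrix (Fin (k+1)) (Fin (k+1)) ℂ := Matrix.diagonal z₁ with hE₁def
  set F₁ : Matrix (Fin (k+1)) (Fin (k+1)) ℂ := Matrix.diagonal (fun i => (z₁ i)⁻¹) with hF₁def
  set E₂ : Matrix (Fin (k+1)) (Fin (k+1)) ℂ := Matrix.diagonal z₂ with hE₂def
  set F₂ : Matrix (Fin (k+1)) (Fin (k+1)) ℂ := Matrix.diagonal (fun i => (z₂ i)⁻¹) with hF₂def
  have hE₁F₁ : E₁ * F₁ = 1 := by
    rw [hE₁def, hF₁def, Matrix.diagonal_mul_diagonal, ← Matrix.diagonal_one]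
    exact congrArg Matrix.diagonal (funext fun i => mul_inv_cancel₀ (hz₁ne i))
  have hF₁E₁ : F₁ * E₁ = 1 := by
    rw [hE₁def, hF₁def, Matrix.diagonal_mul_diagonal, ← Matrix.diagonal_one]
    exact congrArg Matrix.diagonal (funext fun i => inv_mul_cancel₀ (hz₁ne i))
  have hE₂F₂ : E₂ * F₂ = 1 := by
    rw [hE₂def, hF₂def, Matrix.diagonal_mul_diagonal, ← Matrix.diagonal_one]
    exact congrArg Matrix.diagonal (funext fun i => mul_inv_cancel₀ (hz₂ne i))
  have hF₂E₂ : F₂ * E₂ = 1 := by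
    rw [hE₂def, hF₂def, Matrix.diagonal_mul_diagonal, ← Matrix.diagonal_one]
    exact congrArg Matrix.diagonal (funext fun i => inv_mul_cancel₀ (hz₂ne i))
  set S₁ : Matrix (Fin (k+1)) (Fin (k+1)) ℂ := E₁ * Q₁ * F₁ with hS₁def
  set S₂ : Matrix (Fin (k+1)) (Fin (k+1)) ℂ := E₂ * Q₂ * F₂ with hS₂def
  have hS₁app : ∀ i j, S₁ i j = z₁ i * Q₁ i j * (z₁ j)⁻¹ := by
    intro i j
    rw [hS₁def, hF₁def, Matrix.mul_diagonal, hE₁def, Matrix.diagonal_mul]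
  have hS₂app : ∀ i j, S₂ i j = z₂ i * Q₂ i j * (z₂ j)⁻¹ := by
    intro i j
    rw [hS₂def, hF₂def, Matrix.mul_diagonal, hE₂def, Matrix.diagonal_mul]
  have hQ₁app : ∀ i j, Q₁ i j = ((P₁ i j : ℝ) : ℂ) := fun i j => rfl
  have hQ₂app : ∀ i j, Q₂ i j = ((P₂ i j : ℝ) : ℂ) := fun i j => rfl
  have hs₁sqc : ∀ i, z₁ i * z₁ i = ((μ₁ i : ℝ) : ℂ) := by
    intro i
    rw [hz₁def, ← Complex.ofReal_mul, hs₁sq]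
  have hs₂sqc : ∀ i, z₂ i * z₂ i = ((μ₂ i : ℝ) : ℂ) := by
    intro i
    rw [hz₂def, ← Complex.ofReal_mul, hs₂sq]
  have hrevc₁ : ∀ i j, (z₁ i * z₁ i) * Q₁ i j = (z₁ j * z₁ j) * Q₁ j i := by
    intro i j
    rw [hs₁sqc, hs₁sqc, hQ₁app, hQ₁app, ← Complex.ofReal_mul, ← Complex.ofReal_mul]
    exact_mod_cast congrArg Complex.ofReal (hrev₁ i j)
  have hrevc₂ : ∀ i j, (z₂ i * z₂ i) * Q₂ i j = (z₂ j * z₂ j) * Q₂ j i := by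
    intro i j
    rw [hs₂sqc, hs₂sqc, hQ₂app, hQ₂app, ← Complex.ofReal_mul, ← Complex.ofReal_mul]
    exact_mod_cast congrArg Complex.ofReal (hrev₂ i j)
  have hsymm₁ : ∀ i j, S₁ j i = S₁ i j := by
    intro i j
    rw [hS₁app, hS₁app]
    field_simp [hz₁ne i, hz₁ne j]
    linear_combination hrevc₁ j i
  have hsymm₂ : ∀ i j, S₂ j i = S₂ i j := by
    intro i j
    rw [hS₂app, hS₂app]
    field_simp [hz₂ne i, hz₂ne j]
    linear_combination hrevc₂ j i
  have hreal₁ : ∀ i j, (starRingEnd ℂ) (S₁ i j) = S₁ i j := by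
    intro i j
    rw [hS₁app, hQ₁app, hz₁def]
    rw [show ((s₁ i : ℝ) : ℂ) * ((P₁ i j : ℝ) : ℂ) * (((s₁ j : ℝ) : ℂ))⁻¹
        = (((s₁ i * P₁ i j * (s₁ j)⁻¹ : ℝ)) : ℂ) by push_cast; ring]
    exact Complex.conj_ofReal _
  have hreal₂ : ∀ i j, (starRingEnd ℂ) (S₂ i j) = S₂ i j := by
    intro i j
    rw [hS₂app, hQ₂app, hz₂def]
    rw [show ((s₂ i : ℝ) : ℂ) * ((P₂ i j : ℝ) : ℂ) * (((s₂ j : ℝ) : ℂ))⁻¹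
        = (((s₂ i * P₂ i j * (s₂ j)⁻¹ : ℝ)) : ℂ) by push_cast; ring]
    exact Complex.conj_ofReal _
  have hherm₁ : S₁.IsHermitian := by
    ext i j
    rw [Matrix.conjTranspose_apply]
    rw [show star (S₁ j i) = (starRingEnd ℂ) (S₁ j i) from rfl, hreal₁ j i, hsymm₁ i j]
  have hherm₂ : S₂.IsHermitian := by
    ext i j
    rw [Matrix.conjTranspose_apply]
    rw [show star (S₂ j i) = (starRingEnd ℂ) (S₂ j i) from rfl, hreal₂ j i, hsymm₂ i j]
  have hS₁T : S₁ᵀ = S₁ := by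
    ext i j
    rw [Matrix.transpose_apply, hsymm₁ i j]
  have hS₂T : S₂ᵀ = S₂ := by
    ext i j
    rw [Matrix.transpose_apply, hsymm₂ i j]
  -- eigenvector facts
  have hF₁z₁ : F₁ *ᵥ z₁ = fun _ => 1 := by
    funext i
    rw [hF₁def, Matrix.mulVec_diagonal]
    exact inv_mul_cancel₀ (hz₁ne i)
  have hF₂z₂ : F₂ *ᵥ z₂ = fun _ => 1 := by
    funext i
    rw [hF₂def, Matrix.mulVec_diagonal]
    exact inv_mul_cancel₀ (hz₂ne i)
  have hQ₁one : Q₁ *ᵥ (fun _ => (1:ℂ)) = fun _ => 1 := by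
    funext i
    simp only [Matrix.mulVec, dotProduct, hQ₁app, mul_one]
    rw [← Complex.ofReal_sum, hrow₁ i, Complex.ofReal_one]
  have hQ₂one : Q₂ *ᵥ (fun _ => (1:ℂ)) = fun _ => 1 := by
    funext i
    simp only [Matrix.mulVec, dotProduct, hQ₂app, mul_one]
    rw [← Complex.ofReal_sum, hrow₂ i, Complex.ofReal_one]
  have hE₁one : E₁ *ᵥ (fun _ => (1:ℂ)) = z₁ := by
    funext i
    rw [hE₁def, Matrix.mulVec_diagonal, mul_one]
  have hE₂one : E₂ *ᵥ (fun _ => (1:ℂ)) = z₂ := by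
    funext i
    rw [hE₂def, Matrix.mulVec_diagonal, mul_one]
  have hS₁z : S₁ *ᵥ z₁ = z₁ := by
    rw [hS₁def, ← Matrix.mulVec_mulVec, ← Matrix.mulVec_mulVec, hF₁z₁, hQ₁one, hE₁one]
  have hS₂z : S₂ *ᵥ z₂ = z₂ := by
    rw [hS₂def, ← Matrix.mulVec_mulVec, ← Matrix.mulVec_mulVec, hF₂z₂, hQ₂one, hE₂one]
  have hz₁S₁ : Matrix.vecMul z₁ S₁ = z₁ := by
    rw [← hS₁T, Matrix.vecMul_transpose, hS₁z]
  have hz₂S₂ : Matrix.vecMul z₂ S₂ = z₂ := by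
    rw [← hS₂T, Matrix.vecMul_transpose, hS₂z]
  -- the weighting diagonal matrices
  set R : Matrix (Fin (k+1)) (Fin (k+1)) ℂ := Matrix.diagonal (fun i => (z₂ i)⁻¹ * z₁ i)
    with hRdef
  set R' : Matrix (Fin (k+1)) (Fin (k+1)) ℂ := Matrix.diagonal (fun i => (z₁ i)⁻¹ * z₂ i)
    with hR'def
  have hR : R = F₂ * E₁ := by
    rw [hRdef, hF₂def, hE₁def, Matrix.diagonal_mul_diagonal]
  have hR' : R' = F₁ * E₂ := by
    rw [hR'def, hF₁def, hE₂def, Matrix.diagonal_mul_diagonal]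
  set N : Matrix (Fin (k+1)) (Fin (k+1)) ℂ := R' * S₂ * (R * S₁) with hNdef
  -- transpose identities
  have hQ₁t : Q₁ᵀ = (E₁ * E₁) * Q₁ * (F₁ * F₁) := by
    ext i j
    rw [Matrix.transpose_apply]
    rw [hE₁def, hF₁def, Matrix.diagonal_mul_diagonal, Matrix.diagonal_mul_diagonal,
      Matrix.mul_diagonal, Matrix.diagonal_mul]
    field_simp [hz₁ne i, hz₁ne j]
    linear_combination hrevc₁ j i
  have hQ₂t : Q₂ᵀ = (E₂ * E₂) * Q₂ * (F₂ * F₂) := by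
    ext i j
    rw [Matrix.transpose_apply]
    rw [hE₂def, hF₂def, Matrix.diagonal_mul_diagonal, Matrix.diagonal_mul_diagonal,
      Matrix.mul_diagonal, Matrix.diagonal_mul]
    field_simp [hz₂ne i, hz₂ne j]
    linear_combination hrevc₂ j i
  have hNeq : N = F₁ * ((Q₁ * Q₂)ᵀ) * E₁ := by
    rw [hNdef, hR, hR', hS₁def, hS₂def, Matrix.transpose_mul, hQ₁t, hQ₂t]
    simp only [Matrix.mul_assoc, hF₁E₁, Matrix.mul_one]
  have hmapmul : (P₁ * P₂).map Complex.ofReal = Q₁ * Q₂ := by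
    ext i j
    rw [Matrix.map_apply, Matrix.mul_apply, Matrix.mul_apply, Complex.ofReal_sum]
    exact Finset.sum_congr rfl fun l _ => by rw [hQ₁app, hQ₂app, Complex.ofReal_mul]
  have hNcp : N.charpoly = ((P₁ * P₂).map Complex.ofReal).charpoly := by
    rw [hNeq, my_charpoly_conj hF₁E₁, my_charpoly_transpose, hmapmul]
  have hz₁R' : Matrix.vecMul z₁ R' = z₂ := by
    funext j
    rw [hR'def, Matrix.vecMul_diagonal, ← mul_assoc, mul_inv_cancel₀ (hz₁ne j), one_mul]
  have hz₂R : Matrix.vecMul z₂ R = z₁ := by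
    funext j
    rw [hRdef, Matrix.vecMul_diagonal, ← mul_assoc, mul_inv_cancel₀ (hz₂ne j), one_mul]
  have hz₁N : Matrix.vecMul z₁ N = z₁ := by
    have hh : Matrix.vecMul (Matrix.vecMul (Matrix.vecMul (Matrix.vecMul z₁ R') S₂) R) S₁
        = Matrix.vecMul z₁ N := by
      simp only [Matrix.vecMul_vecMul]
      rw [hNdef, Matrix.mul_assoc (R' * S₂) R S₁]
    rw [← hh, hz₁R', hz₂S₂, hz₂R, hz₁S₁]
  obtain ⟨QK, hsplit, hlift⟩ := key_split N z₁ (hz₁ne 0) hz₁N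
  have hspecM : spec (P₁ * P₂) = (1:ℂ) ::ₘ QK.charpoly.roots := by
    have hd : spec (P₁ * P₂) = ((P₁ * P₂).map Complex.ofReal).charpoly.roots := rfl
    rw [hd, ← hNcp, hsplit,
      Polynomial.roots_mul (mul_ne_zero (Polynomial.X_sub_C_ne_zero 1)
        QK.charpoly_monic.ne_zero),
      Polynomial.roots_X_sub_C, Multiset.singleton_add]
  obtain ⟨t, htmem, hlammem, htopall, -⟩ := hlam
  have hηex : ∃ η ∈ QK.charpoly.roots, ‖lam‖ ≤ ‖η‖ := by
    by_cases ht1 : t = 1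
    · subst ht1
      rw [hspecM, Multiset.erase_cons_head] at hlammem
      exact ⟨lam, hlammem, le_refl _⟩
    · rw [hspecM] at htmem
      exact ⟨t, (Multiset.mem_cons.1 htmem).resolve_left ht1,
        htopall lam (Multiset.mem_of_mem_erase hlammem)⟩
  obtain ⟨η, hηroot, hlamle⟩ := hηex
  obtain ⟨w, hw0, hNw, hworth⟩ := hlift η hηroot
  have hspec₁ : S₁.charpoly.roots = spec P₁ := by
    rw [hS₁def, my_charpoly_conj hE₁F₁]
    rfl
  have hspec₂ : S₂.charpoly.roots = spec P₂ := by
    rw [hS₂def, my_charpoly_conj hE₂F₂]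
    rfl
  obtain ⟨h1S₁, i₁, hsm₁⟩ := eig_facts P₁ hP₁ hrow₁ S₁ hspec₁ hherm₁ lam₁ hlam₁
  obtain ⟨h1S₂, i₂, hsm₂⟩ := eig_facts P₂ hP₂ hrow₂ S₂ hspec₂ hherm₂ lam₂ hlam₂
  set K₁ : ℝ := ⨆ i, μ₁ i / μ₂ i with hK₁def
  set K₂ : ℝ := ⨆ i, μ₂ i / μ₁ i with hK₂def
  have hK₁le : ∀ i, μ₁ i / μ₂ i ≤ K₁ := by
    intro i
    rw [hK₁def]
    exact le_ciSup (f := fun i => μ₁ i / μ₂ i) (Finite.bddAbove_range _) i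
  have hK₂le : ∀ i, μ₂ i / μ₁ i ≤ K₂ := by
    intro i
    rw [hK₂def]
    exact le_ciSup (f := fun i => μ₂ i / μ₁ i) (Finite.bddAbove_range _) i
  have hK₁pos : 0 < K₁ := lt_of_lt_of_le (div_pos (hμ₁pos 0) (hμ₂pos 0)) (hK₁le 0)
  have hK₂pos : 0 < K₂ := lt_of_lt_of_le (div_pos (hμ₂pos 0) (hμ₁pos 0)) (hK₂le 0)
  have hsqK₁ : ∀ i, ‖(z₂ i)⁻¹ * z₁ i‖ ≤ Real.sqrt K₁ := by
    intro i
    rw [norm_mul, norm_inv]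
    rw [hz₁def, hz₂def, Complex.norm_real, Complex.norm_real, Real.norm_eq_abs, Real.norm_eq_abs,
      abs_of_pos (hs₁pos i), abs_of_pos (hs₂pos i)]
    have he : (s₂ i)⁻¹ * s₁ i = Real.sqrt (μ₁ i / μ₂ i) := by
      rw [Real.sqrt_div' (μ₁ i) (hμ₂pos i).le, inv_mul_eq_div]
    rw [he]
    exact Real.sqrt_le_sqrt (hK₁le i)
  have hsqK₂ : ∀ i, ‖(z₁ i)⁻¹ * z₂ i‖ ≤ Real.sqrt K₂ := by
    intro i
    rw [norm_mul, norm_inv]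
    rw [hz₁def, hz₂def, Complex.norm_real, Complex.norm_real, Real.norm_eq_abs, Real.norm_eq_abs,
      abs_of_pos (hs₁pos i), abs_of_pos (hs₂pos i)]
    have he : (s₁ i)⁻¹ * s₂ i = Real.sqrt (μ₂ i / μ₁ i) := by
      rw [Real.sqrt_div' (μ₂ i) (hμ₁pos i).le, inv_mul_eq_div]
    rw [he]
    exact Real.sqrt_le_sqrt (hK₂le i)
  have hstep₁ : ‖(WithLp.equiv 2 (Fin (k+1) → ℂ)).symm (S₁ *ᵥ w)‖
      ≤ β₁ * ‖(WithLp.equiv 2 (Fin (k+1) → ℂ)).symm w‖ :=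
    contract_vec S₁ hherm₁ β₁ hβ₁0 h1S₁ i₁ hsm₁ z₁ hz₁0 hz₁real hS₁z w hworth
  have horth₁ : dotProduct z₁ (S₁ *ᵥ w) = 0 := by
    rw [dotProduct_mulVec, hz₁S₁]
    exact hworth
  have hstep₂ : ‖(WithLp.equiv 2 (Fin (k+1) → ℂ)).symm (R *ᵥ (S₁ *ᵥ w))‖
      ≤ Real.sqrt K₁ * ‖(WithLp.equiv 2 (Fin (k+1) → ℂ)).symm (S₁ *ᵥ w)‖ := by
    rw [hRdef]
    exact diag_contract _ _ (Real.sqrt_nonneg _) hsqK₁ _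
  have horth₂ : dotProduct z₂ (R *ᵥ (S₁ *ᵥ w)) = 0 := by
    rw [dotProduct_mulVec, hz₂R]
    exact horth₁
  have hstep₃ : ‖(WithLp.equiv 2 (Fin (k+1) → ℂ)).symm (S₂ *ᵥ (R *ᵥ (S₁ *ᵥ w)))‖
      ≤ β₂ * ‖(WithLp.equiv 2 (Fin (k+1) → ℂ)).symm (R *ᵥ (S₁ *ᵥ w))‖ :=
    contract_vec S₂ hherm₂ β₂ hβ₂0 h1S₂ i₂ hsm₂ z₂ hz₂0 hz₂real hS₂z _ horth₂
  have hstep₄ : ‖(WithLp.equiv 2 (Fin (k+1) → ℂ)).symm (R' *ᵥ (S₂ *ᵥ (R *ᵥ (S₁ *ᵥ w))))‖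
      ≤ Real.sqrt K₂ * ‖(WithLp.equiv 2 (Fin (k+1) → ℂ)).symm (S₂ *ᵥ (R *ᵥ (S₁ *ᵥ w)))‖ := by
    rw [hR'def]
    exact diag_contract _ _ (Real.sqrt_nonneg _) hsqK₂ _
  have hNww : N *ᵥ w = R' *ᵥ (S₂ *ᵥ (R *ᵥ (S₁ *ᵥ w))) := by
    have hh : R' *ᵥ (S₂ *ᵥ (R *ᵥ (S₁ *ᵥ w))) = N *ᵥ w := by
      simp only [Matrix.mulVec_mulVec]
      rw [hNdef, Matrix.mul_assoc R' S₂ (R * S₁)]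
    exact hh.symm
  have habs : ‖(WithLp.equiv 2 (Fin (k+1) → ℂ)).symm (N *ᵥ w)‖
      = ‖η‖ * ‖(WithLp.equiv 2 (Fin (k+1) → ℂ)).symm w‖ := by
    rw [hNw]
    rw [show (WithLp.equiv 2 (Fin (k+1) → ℂ)).symm (η • w)
        = η • (WithLp.equiv 2 (Fin (k+1) → ℂ)).symm w from rfl]
    rw [norm_smul]
  have hewpos : 0 < ‖(WithLp.equiv 2 (Fin (k+1) → ℂ)).symm w‖ := by
    rw [norm_pos_iff]
    intro hcontra
    apply hw0
    have := congrArg (WithLp.equiv 2 (Fin (k+1) → ℂ)) hcontra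
    simpa using this
  have hηb : ‖η‖ ≤ Real.sqrt K₂ * (β₂ * (Real.sqrt K₁ * β₁)) := by
    have hchain : ‖η‖ * ‖(WithLp.equiv 2 (Fin (k+1) → ℂ)).symm w‖
        ≤ (Real.sqrt K₂ * (β₂ * (Real.sqrt K₁ * β₁)))
          * ‖(WithLp.equiv 2 (Fin (k+1) → ℂ)).symm w‖ := by
      rw [← habs, hNww]
      calc ‖(WithLp.equiv 2 (Fin (k+1) → ℂ)).symm (R' *ᵥ (S₂ *ᵥ (R *ᵥ (S₁ *ᵥ w))))‖
          ≤ Real.sqrt K₂ * ‖(WithLp.equiv 2 (Fin (k+1) → ℂ)).symm (S₂ *ᵥ (R *ᵥ (S₁ *ᵥ w)))‖ :=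
            hstep₄
        _ ≤ Real.sqrt K₂ * (β₂ * ‖(WithLp.equiv 2 (Fin (k+1) → ℂ)).symm (R *ᵥ (S₁ *ᵥ w))‖) :=
            mul_le_mul_of_nonneg_left hstep₃ (Real.sqrt_nonneg _)
        _ ≤ Real.sqrt K₂ * (β₂ * (Real.sqrt K₁
              * ‖(WithLp.equiv 2 (Fin (k+1) → ℂ)).symm (S₁ *ᵥ w)‖)) :=
            mul_le_mul_of_nonneg_left (mul_le_mul_of_nonneg_left hstep₂ hβ₂0)
              (Real.sqrt_nonneg _)
        _ ≤ Real.sqrt K₂ * (β₂ * (Real.sqrt K₁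
              * (β₁ * ‖(WithLp.equiv 2 (Fin (k+1) → ℂ)).symm w‖))) :=
            mul_le_mul_of_nonneg_left (mul_le_mul_of_nonneg_left
              (mul_le_mul_of_nonneg_left hstep₁ (Real.sqrt_nonneg _)) hβ₂0)
              (Real.sqrt_nonneg _)
        _ = (Real.sqrt K₂ * (β₂ * (Real.sqrt K₁ * β₁)))
              * ‖(WithLp.equiv 2 (Fin (k+1) → ℂ)).symm w‖ := by ring
    exact le_of_mul_le_mul_right hchain hewpos
  have hK1K2 : 1 ≤ K₁ * K₂ := by
    have h0 : (1:ℝ) = (μ₁ 0 / μ₂ 0) * (μ₂ 0 / μ₁ 0) := by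
      rw [div_mul_div_comm, mul_comm (μ₁ 0) (μ₂ 0), div_self (mul_pos (hμ₂pos 0) (hμ₁pos 0)).ne']
    rw [h0]
    exact mul_le_mul (hK₁le 0) (hK₂le 0) (div_pos (hμ₂pos 0) (hμ₁pos 0)).le hK₁pos.le
  have hsqrtle : Real.sqrt K₁ * Real.sqrt K₂ ≤ K₁ * K₂ := by
    rw [← Real.sqrt_mul hK₁pos.le]
    have h1 : 1 ≤ Real.sqrt (K₁ * K₂) := by
      rw [show (1:ℝ) = Real.sqrt 1 from (Real.sqrt_one).symm]
      exact Real.sqrt_le_sqrt hK1K2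
    nlinarith [Real.sq_sqrt (le_trans zero_le_one hK1K2), Real.sqrt_nonneg (K₁ * K₂)]
  calc ‖lam‖ ≤ ‖η‖ := hlamle
    _ ≤ Real.sqrt K₂ * (β₂ * (Real.sqrt K₁ * β₁)) := hηb
    _ = (β₁ * β₂) * (Real.sqrt K₁ * Real.sqrt K₂) := by ring
    _ ≤ (β₁ * β₂) * (K₁ * K₂) := mul_le_mul_of_nonneg_left hsqrtle (mul_nonneg hβ₁0 hβ₂0)
    _ = β₁ * β₂ * (K₁ * K₂) := rfl
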